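/- Let E be a finite-dimensional real inner product space, K ⊆ E a nonempty closed convex set, and F : E → E continuous and pseudomonotone on K. If there exists x̂ ∈ K such that F(x̂) lies in the topological interior of the dual cone of the recession cone of K, i.e. F(x̂) ∈ int{d ∈ E | ⟪v, d⟫ ≥ 0 for all v ∈ K∞}, then the solution set SOL(K, F) is nonempty, convex and compact. -/

import Mathlib

/-!
By pseudomonotonicity and continuity (Minty's lemma), `SOL(K, F)` is the set of `x ∈ K` with
`0 ≤ ⟪F y, y - x⟫` for all `y ∈ K`: the trace on `K` of an intersection of closed half-spaces,
hence closed and convex. Taking `y = x̂` puts it inside `{x ∈ K | 0 ≤ ⟪F x̂, x̂ - x⟫}`, which is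
compact: a nonzero asymptotic direction `d` of this set would be a recession direction of `K`
with `⟪F x̂, d⟫ ≤ 0`, against `F x̂` lying in the interior of the dual cone.

Nonemptiness then follows from the finite intersection property in that compact set. For a finite
`s ⊆ K`, the pieces `conv s ∩ {x | 0 ≤ ⟪F y, y - x⟫}`, `y ∈ s`, cover `conv s` by
pseudomonotonicity, and by induction on `s` any all but one of them have a common point. Berge's
theorem (a finite family of compact convex sets with convex union, any all but one of which
meet, has a common point) then makes them all meet.
-/
open RealInnerProductSpace Filter Topology

section Berge

variable {ι E : Type*} [AddCommGroup E] [Module ℝ E] [DecidableEq ι] {s : Finset ι}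
  {C : ι → Set E} {j₀ : ι}

theorem convex_biUnion_erase_inter_setOf_eq (f : E →ₗ[ℝ] ℝ) {u : ℝ}
    (hU : Convex ℝ (⋃ i ∈ s, C i)) (hj₀ : ∀ x ∈ C j₀, f x ≠ u) :
    Convex ℝ (⋃ i ∈ s.erase j₀, C i ∩ {x | f x = u}) := by
  convert hU.inter (convex_hyperplane f.isLinear u) using 1
  ext x
  simp only [Set.mem_iUnion, Set.mem_inter_iff, exists_and_right, exists_prop]
  constructor
  · rintro ⟨⟨i, hi, hx⟩, hxu⟩
    exact ⟨⟨i, Finset.mem_of_mem_erase hi, hx⟩, hxu⟩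
  · rintro ⟨⟨i, hi, hx⟩, hxu⟩
    refine ⟨⟨i, Finset.mem_erase.mpr ⟨?_, hi⟩, hx⟩, hxu⟩
    rintro rfl
    exact hj₀ x hx hxu

variable [TopologicalSpace E] [IsTopologicalAddGroup E] [ContinuousSMul ℝ E]

theorem IsClosed.inter_nonempty_of_convex_union {A B : Set E} (hA : IsClosed A) (hB : IsClosed B)
    (hA' : A.Nonempty) (hB' : B.Nonempty) (hAB : Convex ℝ (A ∪ B)) : (A ∩ B).Nonempty :=
  (isPreconnected_closed_iff.mp hAB.isPreconnected _ _ hA hB subset_rfl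
    (by rwa [Set.union_inter_cancel_left]) (by rwa [Set.union_inter_cancel_right])).mono
    Set.inter_subset_right

theorem exists_mem_segment_apply_eq {f : E → ℝ} (hf : Continuous f) {a b : E} {u : ℝ}
    (ha : f a ≤ u) (hb : u ≤ f b) : ∃ z ∈ segment ℝ a b, f z = u :=
  (convex_segment a b).isPreconnected.intermediate_value (left_mem_segment ℝ a b)
    (right_mem_segment ℝ a b) hf.continuousOn ⟨ha, hb⟩

theorem nonempty_biInter_erase_inter_setOf_eq {f : E → ℝ} (hf : Continuous f) {u : ℝ}
    (hconv : ∀ i ∈ s, Convex ℝ (C i)) (hC : ∀ j ∈ s, (⋂ i ∈ s.erase j, C i).Nonempty)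
    (hj₀ : j₀ ∈ s) (hfu : ∀ x ∈ ⋂ i ∈ s.erase j₀, C i, f x ≤ u) (hfv : ∀ x ∈ C j₀, u ≤ f x) :
    ∀ j ∈ s.erase j₀, (⋂ i ∈ (s.erase j₀).erase j, C i ∩ {x | f x = u}).Nonempty := by
  intro j hj
  obtain ⟨hjj₀, hjs⟩ := Finset.mem_erase.mp hj
  obtain ⟨a, ha⟩ := hC j hjs
  obtain ⟨g, hg⟩ := hC j₀ hj₀
  have ha_mem : ∀ i ∈ s, i ≠ j → a ∈ C i := fun i hi hij =>
    Set.mem_iInter₂.mp ha i (Finset.mem_erase.mpr ⟨hij, hi⟩)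
  have hg_mem : ∀ i ∈ s, i ≠ j₀ → g ∈ C i := fun i hi hij =>
    Set.mem_iInter₂.mp hg i (Finset.mem_erase.mpr ⟨hij, hi⟩)
  obtain ⟨z, hz, hfz⟩ := exists_mem_segment_apply_eq hf (hfu g hg)
    (hfv a (ha_mem j₀ hj₀ hjj₀.symm))
  refine ⟨z, Set.mem_iInter₂.mpr fun i hi => ⟨?_, hfz⟩⟩
  obtain ⟨hij, hij₀, his⟩ : i ≠ j ∧ i ≠ j₀ ∧ i ∈ s := by simpa using hi
  exact (hconv i his).segment_subset (hg_mem i his hij₀) (ha_mem i his hij) hz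

variable [LocallyConvexSpace ℝ E] [T2Space E]

theorem nonempty_biInter_of_convex_biUnion (hs : 1 < s.card)
    (hconv : ∀ i ∈ s, Convex ℝ (C i)) (hcomp : ∀ i ∈ s, IsCompact (C i))
    (hU : Convex ℝ (⋃ i ∈ s, C i)) (hC : ∀ j ∈ s, (⋂ i ∈ s.erase j, C i).Nonempty) :
    (⋂ i ∈ s, C i).Nonempty := by
  induction s using Finset.strongInduction generalizing C with
  | H s ih =>
  obtain hs2 | hs3 : s.card = 2 ∨ 2 < s.card := by omega
  · obtain ⟨a, b, hab, rfl⟩ := Finset.card_eq_two.mp hs2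
    have ha : (C a).Nonempty := by
      simpa [Finset.erase_insert_of_ne hab] using hC b (by simp)
    have hb : (C b).Nonempty := by
      simpa [Finset.erase_insert (Finset.notMem_singleton.mpr hab)] using hC a (by simp)
    simp only [Finset.mem_insert, Finset.mem_singleton, forall_eq_or_imp, forall_eq] at hcomp
    simp only [Finset.mem_insert, Finset.mem_singleton, Set.iUnion_iUnion_eq_or_left,
      Set.iUnion_iUnion_eq_left] at hU
    simpa [Set.iInter_iInter_eq_or_left] using
      hcomp.1.isClosed.inter_nonempty_of_convex_union hcomp.2.isClosed ha hb hU
  by_contra hempty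
  obtain ⟨j₀, hj₀⟩ := Finset.card_pos.mp (by omega : 0 < s.card)
  set t := s.erase j₀
  have ht : 1 < t.card := by rw [Finset.card_erase_of_mem hj₀]; omega
  obtain ⟨i₁, hi₁⟩ := Finset.card_pos.mp (by omega : 0 < t.card)
  have hdisj : Disjoint (⋂ i ∈ t, C i) (C j₀) := by
    refine Set.disjoint_left.mpr fun x hxt hxj₀ => hempty ⟨x, Set.mem_iInter₂.mpr fun i hi => ?_⟩
    by_cases hij : i = j₀
    · exact hij ▸ hxj₀
    · exact Set.mem_iInter₂.mp hxt i (Finset.mem_erase.mpr ⟨hij, hi⟩)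
  -- A hyperplane separating `C j₀` from the intersection of the others slices the other sets
  -- into a smaller family satisfying the same hypotheses; a common point of the slices would be
  -- a point of that intersection on the hyperplane.
  obtain ⟨f, u, v, hfu, huv, hfv⟩ := geometric_hahn_banach_compact_closed
    (convex_iInter₂ fun i hi => hconv i (Finset.mem_of_mem_erase hi))
    ((hcomp i₁ (Finset.mem_of_mem_erase hi₁)).of_isClosed_subset
      (isClosed_biInter fun i hi => (hcomp i (Finset.mem_of_mem_erase hi)).isClosed)
      (Set.biInter_subset_of_mem hi₁))
    (hconv j₀ hj₀) (hcomp j₀ hj₀).isClosed hdisj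
  obtain ⟨z, hz⟩ := ih t (Finset.erase_ssubset hj₀) (C := fun i => C i ∩ {x | f x = u}) ht
    (fun i hi => (hconv i (Finset.mem_of_mem_erase hi)).inter
      (convex_hyperplane f.toLinearMap.isLinear u))
    (fun i hi => (hcomp i (Finset.mem_of_mem_erase hi)).inter_right
      (isClosed_eq f.continuous continuous_const))
    (convex_biUnion_erase_inter_setOf_eq f.toLinearMap hU fun x hx => (huv.trans (hfv x hx)).ne')
    (nonempty_biInter_erase_inter_setOf_eq f.continuous hconv hC hj₀ (fun x hx => (hfu x hx).le)
      fun x hx => (huv.trans (hfv x hx)).le)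
  have hzt : z ∈ ⋂ i ∈ t, C i := Set.mem_iInter₂.mpr fun i hi => (Set.mem_iInter₂.mp hz i hi).1
  exact (hfu z hzt).ne (Set.mem_iInter₂.mp hz i₁ hi₁).2

end Berge

section Cones

variable {E : Type*} [AddCommGroup E] [Module ℝ E]

def recessionCone (K : Set E) : Set E := {d | ∀ x ∈ K, ∀ t : ℝ, 0 ≤ t → x + t • d ∈ K}

theorem Convex.asymptoticCone_subset_recessionCone [TopologicalSpace E] [IsTopologicalAddGroup E]
    [ContinuousSMul ℝ E] {K : Set E} (hK : Convex ℝ K) (hKc : IsClosed K) :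
    asymptoticCone ℝ K ⊆ recessionCone K := fun d hd x hx t ht => by
  simpa [add_comm] using hK.smul_vadd_mem_of_isClosed_of_mem_asymptoticCone hKc ht hd hx

end Cones

section InnerProduct

variable {E : Type*} [NormedAddCommGroup E] [InnerProductSpace ℝ E]

theorem convex_setOf_inner_sub_nonneg (v y : E) : Convex ℝ {x | 0 ≤ ⟪v, y - x⟫} := by
  simp_rw [inner_sub_right, sub_nonneg]
  exact convex_halfSpace_le (innerₛₗ ℝ v).isLinear _

theorem isClosed_setOf_inner_sub_nonneg (v y : E) : IsClosed {x | 0 ≤ ⟪v, y - x⟫} :=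
  isClosed_le continuous_const (by fun_prop)

theorem inner_pos_of_mem_interior_innerDual [CompleteSpace E] {S : Set E} {p d : E}
    (hp : p ∈ interior (ProperCone.innerDual S : Set E)) (hd : d ∈ S) (hd0 : d ≠ 0) :
    0 < ⟪d, p⟫ := by
  have hcont : Continuous fun t : ℝ => p - t • d := by fun_prop
  have hlim := (hcont.tendsto' 0 p (by simp)).mono_left (nhdsWithin_le_nhds (s := Set.Ioi 0))
  obtain ⟨t, hdual, ht⟩ := ((hlim.eventually (mem_interior_iff_mem_nhds.mp hp)).and
    self_mem_nhdsWithin).exists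
  have h := ProperCone.mem_innerDual.mp hdual hd
  rw [inner_sub_right, real_inner_smul_right, real_inner_self_eq_norm_sq] at h
  have : 0 < t * ‖d‖ ^ 2 := mul_pos ht (by positivity)
  linarith

theorem isCompact_sep_inner_sub_nonneg [FiniteDimensional ℝ E] {K : Set E} (hKc : IsClosed K)
    (hK : Convex ℝ K) {x₀ p : E} (hx₀ : x₀ ∈ K)
    (hp : p ∈ interior (ProperCone.innerDual (recessionCone K) : Set E)) :
    IsCompact {x ∈ K | 0 ≤ ⟪p, x₀ - x⟫} := by
  set L := {x ∈ K | 0 ≤ ⟪p, x₀ - x⟫}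
  have hLc : IsClosed L := hKc.inter (isClosed_setOf_inner_sub_nonneg p x₀)
  have hL : Convex ℝ L := hK.inter (convex_setOf_inner_sub_nonneg p x₀)
  refine Metric.isCompact_of_isClosed_isBounded hLc ?_
  by_contra hunb
  obtain ⟨d, hd0, hd⟩ := not_bounded_iff_exists_ne_zero_mem_asymptoticCone.mp hunb
  have hpd : ⟪p, d⟫ ≤ 0 := by
    simpa using (hL.asymptoticCone_subset_recessionCone hLc hd x₀ ⟨hx₀, by simp⟩ 1 zero_le_one).2
  have := inner_pos_of_mem_interior_innerDual hp
    (hK.asymptoticCone_subset_recessionCone hKc (asymptoticCone_mono (Set.sep_subset _ _) hd)) hd0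
  rw [real_inner_comm] at this
  linarith

def PseudomonotoneOn (F : E → E) (K : Set E) : Prop :=
  ∀ x ∈ K, ∀ y ∈ K, 0 ≤ ⟪F x, y - x⟫ → 0 ≤ ⟪F y, y - x⟫

def viSolutions (K : Set E) (F : E → E) : Set E := {x ∈ K | ∀ y ∈ K, 0 ≤ ⟪F x, y - x⟫}

def mintySolutions (K : Set E) (F : E → E) : Set E := {x ∈ K | ∀ y ∈ K, 0 ≤ ⟪F y, y - x⟫}

variable {K : Set E} {F : E → E}

theorem PseudomonotoneOn.viSolutions_subset_mintySolutions (hF : PseudomonotoneOn F K) :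
    viSolutions K F ⊆ mintySolutions K F :=
  fun x ⟨hxK, hx⟩ => ⟨hxK, fun y hy => hF x hxK y hy (hx y hy)⟩

theorem mintySolutions_subset_viSolutions (hK : Convex ℝ K) (hF : ContinuousOn F K) :
    mintySolutions K F ⊆ viSolutions K F := by
  rintro x ⟨hxK, hx⟩
  refine ⟨hxK, fun y hy => ?_⟩
  set γ : ℝ → E := fun t => x + t • (y - x)
  have hγK : ∀ t ∈ Set.Ioc (0 : ℝ) 1, γ t ∈ K := fun t ht => by
    simpa [γ, AffineMap.lineMap_apply_module', add_comm] using
      hK.lineMap_mem hxK hy ⟨ht.1.le, ht.2⟩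
  have hγ : Tendsto γ (𝓝[>] 0) (𝓝[K] x) := by
    refine tendsto_nhdsWithin_iff.mpr ⟨?_, ?_⟩
    · exact ((show Continuous γ by fun_prop).tendsto' 0 x (by simp [γ])).mono_left
        nhdsWithin_le_nhds
    · filter_upwards [Ioc_mem_nhdsGT zero_lt_one] with t ht using hγK t ht
  have hlim : Tendsto (fun t => ⟪F (γ t), y - x⟫) (𝓝[>] 0) (𝓝 ⟪F x, y - x⟫) :=
    ((hF x hxK).tendsto.comp hγ).inner tendsto_const_nhds
  refine ge_of_tendsto hlim ?_
  filter_upwards [Ioc_mem_nhdsGT zero_lt_one] with t ht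
  have h := hx (γ t) (hγK t ht)
  rw [show γ t - x = t • (y - x) by simp [γ], real_inner_smul_right] at h
  exact nonneg_of_mul_nonneg_right h ht.1

theorem PseudomonotoneOn.viSolutions_eq_mintySolutions (hF : PseudomonotoneOn F K)
    (hK : Convex ℝ K) (hFc : ContinuousOn F K) : viSolutions K F = mintySolutions K F :=
  hF.viSolutions_subset_mintySolutions.antisymm (mintySolutions_subset_viSolutions hK hFc)

theorem mintySolutions_eq_inter_biInter :
    mintySolutions K F = K ∩ ⋂ y ∈ K, {x | 0 ≤ ⟪F y, y - x⟫} := by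
  ext x
  simp [mintySolutions]

theorem isClosed_mintySolutions (hK : IsClosed K) : IsClosed (mintySolutions K F) := by
  rw [mintySolutions_eq_inter_biInter]
  exact hK.inter (isClosed_biInter fun y _ => isClosed_setOf_inner_sub_nonneg (F y) y)

theorem convex_mintySolutions (hK : Convex ℝ K) : Convex ℝ (mintySolutions K F) := by
  rw [mintySolutions_eq_inter_biInter]
  exact hK.inter (convex_iInter₂ fun y _ => convex_setOf_inner_sub_nonneg (F y) y)

theorem PseudomonotoneOn.exists_mem_convexHull_forall_inner_nonneg (hF : PseudomonotoneOn F K)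
    (hK : Convex ℝ K) {s : Finset E} (hs : s.Nonempty) (hsK : ↑s ⊆ K) :
    ∃ x ∈ convexHull ℝ (s : Set E), ∀ y ∈ s, 0 ≤ ⟪F y, y - x⟫ := by
  classical
  induction s using Finset.strongInduction with
  | H s ih =>
  obtain ⟨y, rfl⟩ | hs2 := hs.exists_eq_singleton_or_nontrivial
  · exact ⟨y, subset_convexHull ℝ _ (by simp), by simp⟩
  set C : E → Set E := fun y => convexHull ℝ (s : Set E) ∩ {x | 0 ≤ ⟪F y, y - x⟫}
  have hU : (⋃ y ∈ s, C y) = convexHull ℝ (s : Set E) := by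
    refine subset_antisymm (Set.iUnion₂_subset fun y _ => Set.inter_subset_left) fun x hx => ?_
    obtain ⟨y, hy, hxy⟩ := ((innerₛₗ ℝ (F x)).convexOn convex_univ).exists_ge_of_mem_convexHull
      (Set.subset_univ _) hx
    have hxy : 0 ≤ ⟪F x, y - x⟫ := by simpa [inner_sub_right] using hxy
    exact Set.mem_biUnion hy
      ⟨hx, hF x (convexHull_min hsK hK hx) y (hsK hy) hxy⟩
  have hC : ∀ j ∈ s, (⋂ y ∈ s.erase j, C y).Nonempty := by
    intro j hj
    obtain ⟨x, hx, hxs⟩ := ih (s.erase j) (Finset.erase_ssubset hj) hs2.erase_nonempty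
      ((Finset.coe_subset.mpr (s.erase_subset j)).trans hsK)
    exact ⟨x, Set.mem_iInter₂.mpr fun y hy =>
      ⟨convexHull_mono (Finset.coe_subset.mpr (s.erase_subset j)) hx, hxs y hy⟩⟩
  obtain ⟨x, hx⟩ := nonempty_biInter_of_convex_biUnion (Finset.one_lt_card_iff_nontrivial.mpr hs2)
    (fun y _ => (convex_convexHull ℝ _).inter (convex_setOf_inner_sub_nonneg (F y) y))
    (fun y _ => (s.finite_toSet.isCompact_convexHull (𝕜 := ℝ)).inter_right
      (isClosed_setOf_inner_sub_nonneg (F y) y))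
    (by rw [hU]; exact convex_convexHull ℝ _) hC
  obtain ⟨y, hy⟩ := hs
  exact ⟨x, (Set.mem_iInter₂.mp hx y hy).1, fun y hy => (Set.mem_iInter₂.mp hx y hy).2⟩

theorem PseudomonotoneOn.mintySolutions_nonempty (hF : PseudomonotoneOn F K) (hK : Convex ℝ K)
    {x₀ : E} (hx₀ : x₀ ∈ K) (hL : IsCompact {x ∈ K | 0 ≤ ⟪F x₀, x₀ - x⟫}) :
    (mintySolutions K F).Nonempty := by
  classical
  have hfin : ∀ u : Finset K, ({x ∈ K | 0 ≤ ⟪F x₀, x₀ - x⟫} ∩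
      ⋂ y ∈ u, {x | 0 ≤ ⟪F y, y - x⟫}).Nonempty := by
    intro u
    set s := insert x₀ (u.map (Function.Embedding.subtype (· ∈ K)))
    have hsK : ↑s ⊆ K := by simp [s, Set.insert_subset_iff, hx₀]
    obtain ⟨x, hx, hxs⟩ :=
      hF.exists_mem_convexHull_forall_inner_nonneg hK (Finset.insert_nonempty _ _) hsK
    exact ⟨x, ⟨convexHull_min hsK hK hx, hxs x₀ (Finset.mem_insert_self _ _)⟩,
      Set.mem_iInter₂.mpr fun y hy => hxs y (Finset.mem_insert_of_mem (Finset.mem_map_of_mem _ hy))⟩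
  obtain ⟨x, ⟨hxK, -⟩, hx⟩ := hL.inter_iInter_nonempty (fun y : K => {x | 0 ≤ ⟪F y, y - x⟫})
    (fun y => isClosed_setOf_inner_sub_nonneg _ _) hfin
  exact ⟨x, hxK, fun y hy => Set.mem_iInter.mp hx ⟨y, hy⟩⟩

end InnerProduct

theorem stmt_9_general {E : Type*} [NormedAddCommGroup E] [InnerProductSpace ℝ E]
    [FiniteDimensional ℝ E]
    (K : Set E) (hKc : IsClosed K) (hKconv : Convex ℝ K)
    (F : E → E) (hF : Continuous F)
    (hpseudo : ∀ x ∈ K, ∀ y ∈ K, 0 ≤ ⟪F x, y - x⟫ → 0 ≤ ⟪F y, y - x⟫)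
    (x₀ : E) (hx₀ : x₀ ∈ K)
    (hint : F x₀ ∈ interior {d : E |
      ∀ v ∈ {d' : E | ∀ x ∈ K, ∀ t : ℝ, 0 ≤ t → x + t • d' ∈ K}, 0 ≤ ⟪v, d⟫}) :
    {x ∈ K | ∀ y ∈ K, 0 ≤ ⟪F x, y - x⟫}.Nonempty ∧
      Convex ℝ {x ∈ K | ∀ y ∈ K, 0 ≤ ⟪F x, y - x⟫} ∧
      IsCompact {x ∈ K | ∀ y ∈ K, 0 ≤ ⟪F x, y - x⟫} := by
  have hL : IsCompact {x ∈ K | 0 ≤ ⟪F x₀, x₀ - x⟫} :=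
    isCompact_sep_inner_sub_nonneg hKc hKconv hx₀ hint
  change (viSolutions K F).Nonempty ∧ Convex ℝ (viSolutions K F) ∧ IsCompact (viSolutions K F)
  rw [PseudomonotoneOn.viSolutions_eq_mintySolutions hpseudo hKconv hF.continuousOn]
  exact ⟨PseudomonotoneOn.mintySolutions_nonempty hpseudo hKconv hx₀ hL,
    convex_mintySolutions hKconv,
    hL.of_isClosed_subset (isClosed_mintySolutions hKc) fun x hx => ⟨hx.1, hx.2 x₀ hx₀⟩⟩

theorem stmt_9 {E : Type*} [NormedAddCommGroup E] [InnerProductSpace ℝ E]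
    [FiniteDimensional ℝ E]
    (K : Set E) (hK : K.Nonempty) (hKc : IsClosed K) (hKconv : Convex ℝ K)
    (F : E → E) (hF : Continuous F)
    (hpseudo : ∀ x ∈ K, ∀ y ∈ K, 0 ≤ ⟪F x, y - x⟫ → 0 ≤ ⟪F y, y - x⟫)
    (x₀ : E) (hx₀ : x₀ ∈ K)
    (hint : F x₀ ∈ interior {d : E |
      ∀ v ∈ {d' : E | ∀ x ∈ K, ∀ t : ℝ, 0 ≤ t → x + t • d' ∈ K}, 0 ≤ ⟪v, d⟫}) :
    {x ∈ K | ∀ y ∈ K, 0 ≤ ⟪F x, y - x⟫}.Nonempty ∧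
      Convex ℝ {x ∈ K | ∀ y ∈ K, 0 ≤ ⟪F x, y - x⟫} ∧
      IsCompact {x ∈ K | ∀ y ∈ K, 0 ≤ ⟪F x, y - x⟫} :=
  stmt_9_general K hKc hKconv F hF hpseudo x₀ hx₀ hint
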